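/- arXiv:1103.2959 — 2 statements merged into one kernel-verified Lean document; each statement's English description precedes it below -/
import Mathlib

section
/- The binary affine cube AG(3,2) has no regular elements: for every element e, at least one of AG(3,2) \ e and AG(3,2) / e is non-regular. -/
open Matroid Set

variable {α β : Type*}

/-- Deletion of a set of elements. -/
def Matroid.del (M : Matroid α) (D : Set α) : Matroid α := M ↾ (M.E \ D)

/-- Contraction of a set of elements. -/
def Matroid.con (M : Matroid α) (C : Set α) : Matroid α := (M✶.del C)✶

/-- The rank of a set: the supremum of cardinalities of independent subsets. -/
noncomputable def Matroid.rnk (M : Matroid α) (X : Set α) : ℕ :=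
  sSup (Set.ncard '' {I | M.Indep I ∧ I ⊆ X})

/-- The connectivity function λ(X) = r(X) + r(E − X) − r(M). -/
noncomputable def Matroid.lam (M : Matroid α) (X : Set α) : ℤ :=
  (M.rnk X : ℤ) + (M.rnk (M.E \ X) : ℤ) - (M.rnk M.E : ℤ)

/-- A circuit: a minimal dependent set. -/
def Matroid.IsMinDepCircuit (M : Matroid α) (C : Set α) : Prop :=
  M.Dep C ∧ ∀ D : Set α, D ⊂ C → M.Indep D

/-- A cycle of a (binary) matroid: a disjoint union of circuits. -/
def Matroid.IsCycle (M : Matroid α) (C : Set α) : Prop :=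
  ∃ S : Set (Set α), (∀ c ∈ S, M.IsMinDepCircuit c) ∧ S.PairwiseDisjoint id ∧ C = ⋃₀ S

/-- `M` is representable over the field `𝔽`. -/
def Matroid.IsRepBy (M : Matroid α) (𝔽 : Type) [Field 𝔽] : Prop :=
  ∃ (n : ℕ) (φ : α → (Fin n → 𝔽)), ∀ I : Set α,
    M.Indep I ↔ I ⊆ M.E ∧ LinearIndependent 𝔽 (fun x : I => φ x)

/-- A regular matroid: one representable over every field. -/
def Matroid.IsRegular (M : Matroid α) : Prop :=
  ∀ (𝔽 : Type) [Field 𝔽], M.IsRepBy 𝔽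

/-- A binary matroid: one representable over GF(2). -/
def Matroid.IsBinary (M : Matroid α) : Prop := M.IsRepBy (ZMod 2)

/-- A regular element: one whose deletion and contraction are both regular. -/
def Matroid.IsRegularElem (M : Matroid α) (e : α) : Prop :=
  (M.del {e}).IsRegular ∧ (M.con {e}).IsRegular

/-- An exact j-separation `(X₁, X₂)` of `M`. -/
def Matroid.ExactSep (M : Matroid α) (j : ℕ) (X₁ X₂ : Set α) : Prop :=
  Disjoint X₁ X₂ ∧ X₁ ∪ X₂ = M.E ∧ (j : ℤ) ≤ X₁.ncard ∧ (j : ℤ) ≤ X₂.ncard ∧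
    M.lam X₁ = (j : ℤ) - 1

/-- A j-separation `(X₁, X₂)` of `M`. -/
def Matroid.IsSep (M : Matroid α) (j : ℕ) (X₁ X₂ : Set α) : Prop :=
  Disjoint X₁ X₂ ∧ X₁ ∪ X₂ = M.E ∧ (j : ℤ) ≤ X₁.ncard ∧ (j : ℤ) ≤ X₂.ncard ∧
    M.lam X₁ ≤ (j : ℤ) - 1

/-- A k-connected matroid: no j-separation for j ≤ k − 1. -/
def Matroid.KConnected (M : Matroid α) (k : ℕ) : Prop :=
  ∀ j : ℕ, 1 ≤ j → j ≤ k - 1 → ∀ X₁ X₂ : Set α, ¬ M.IsSep j X₁ X₂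

/-- Matroid isomorphism: a bijection of ground sets preserving independence. -/
def Matroid.MIso (M : Matroid α) (N : Matroid β) : Prop :=
  ∃ e : ↥M.E ≃ ↥N.E, ∀ I : Set ↥M.E,
    M.Indep (Subtype.val '' I) ↔ N.Indep (Subtype.val '' (e '' I))

/-- The columns of the matrix `[I₄ | D]` over GF(2) representing AG(3,2). -/
def agCols : Fin 8 → Fin 4 → ZMod 2 :=
  ![![1,0,0,0], ![0,1,0,0], ![0,0,1,0], ![0,0,0,1],
    ![0,1,1,1], ![1,0,1,1], ![1,1,0,1], ![1,1,1,0]]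

/-!
Contracting a point `e` of AG(3,2) = F₂³ gives the Fano plane: label the remaining points by
their differences `x - e ∈ F₂³ \ {0}`; then `{x, y, z}` is dependent in `M / e` exactly when
`{e, x, y, z}` is an affine plane, i.e. when the labels sum to `0`. The Fano plane is representable
only in characteristic `2`: in coordinates where the points `1, 2, 4` are the unit vectors, the
lines through `7` pin down the points `3, 5, 6` up to scalars, and collinearity of `3, 5, 6` then
reads `2 · (a nonzero product) = 0`. So `M / e` is not representable over `ℚ`.
-/

section Fano

open Submodule

variable {K V : Type*} [Field K] [AddCommGroup V] [Module K V]

theorem linearIndependent_pair_of_triple {a b c : V} (h : LinearIndependent K ![a, b, c]) :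
    LinearIndependent K ![a, b] :=
  (linearIndependent_finSnoc.1 (by simpa using h)).1

theorem mem_span_pair_of_not_linearIndependent {a b c : V} (hab : LinearIndependent K ![a, b])
    (habc : ¬ LinearIndependent K ![a, b, c]) : c ∈ span K {a, b} := by
  by_contra hc
  have hc' : c ∉ span K (range ![a, b]) := by
    rwa [Matrix.range_cons_cons_empty]
  exact habc (by simpa using linearIndependent_finSnoc.2 ⟨hab, hc'⟩)

theorem linearIndependent_sum_smul_iff_det {ι : Type*} [Fintype ι] [DecidableEq ι] {u : ι → V}
    (hu : LinearIndependent K u) (X : ι → ι → K) :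
    LinearIndependent K (fun i => ∑ j, X i j • u j) ↔ (Matrix.of X).det ≠ 0 := by
  have hL : LinearMap.ker (Fintype.linearCombination K u) = ⊥ :=
    LinearMap.ker_eq_bot.2 hu.fintypeLinearCombination_injective
  rw [← isUnit_iff_ne_zero, ← Matrix.isUnit_iff_isUnit_det,
    ← Matrix.linearIndependent_rows_iff_isUnit, ← LinearMap.linearIndependent_iff _ hL]
  simp [Function.comp_def, Fintype.linearCombination_apply]

/-- The points of the Fano plane are the nonzero `i : Fin 8`, read in binary as vectors of `F₂³`,
so that `{i, j, k}` is a line iff `i ^^^ j ^^^ k = 0`; index `0` plays no role. -/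
theorem two_eq_zero_of_fano_det (X : Fin 8 → Fin 3 → K)
    (hX1 : X 1 = ![1, 0, 0]) (hX2 : X 2 = ![0, 1, 0]) (hX4 : X 4 = ![0, 0, 1])
    (hX : ∀ i j k : Fin 8, 0 < i → i < j → j < k →
      ((Matrix.of ![X i, X j, X k]).det ≠ 0 ↔ i ^^^ j ^^^ k ≠ 0)) :
    (2 : K) = 0 := by
  have line : ∀ i j k : Fin 8, 0 < i ∧ i < j ∧ j < k ∧ i ^^^ j ^^^ k = 0 →
      (Matrix.of ![X i, X j, X k]).det = 0 := fun i j k ⟨hi, hij, hjk, h⟩ =>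
    not_ne_iff.mp fun hdet => (hX i j k hi hij hjk).1 hdet h
  have frame : ∀ i j k : Fin 8, 0 < i ∧ i < j ∧ j < k ∧ i ^^^ j ^^^ k ≠ 0 →
      (Matrix.of ![X i, X j, X k]).det ≠ 0 := fun i j k ⟨hi, hij, hjk, h⟩ =>
    (hX i j k hi hij hjk).2 h
  have h123 := line 1 2 3 (by decide)
  have h145 := line 1 4 5 (by decide)
  have h167 := line 1 6 7 (by decide)
  have h246 := line 2 4 6 (by decide)
  have h257 := line 2 5 7 (by decide)
  have h347 := line 3 4 7 (by decide)
  have h356 := line 3 5 6 (by decide)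
  have h127 := frame 1 2 7 (by decide)
  have h147 := frame 1 4 7 (by decide)
  have h247 := frame 2 4 7 (by decide)
  have h234 := frame 2 3 4 (by decide)
  have h125 := frame 1 2 5 (by decide)
  have h146 := frame 1 4 6 (by decide)
  simp [Matrix.det_fin_three, hX1, hX2, hX4] at h123 h145 h167 h246 h257 h347 h356
  simp [Matrix.det_fin_three, hX1, hX2, hX4] at h127 h147 h247 h234 h125 h146
  simp only [h123, h145, h246, mul_zero, zero_mul, sub_zero, add_zero] at h356
  have key : 2 * (X 7 0 * X 7 1 * X 7 2 * X 3 0 * X 5 2 * X 6 1) = 0 := by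
    linear_combination (-(X 7 0 * X 7 1 * X 7 2)) * h356 - (X 5 0 * X 7 2 * X 6 2 * X 7 1) * h347
      + (X 3 0 * X 7 1 * X 6 2 * X 7 1) * h257 + (X 3 0 * X 7 1 * X 5 2 * X 7 0) * h167
  simpa [h127, h147, h247, h234, h125, h146] using key

theorem two_eq_zero_of_fano {p : Fin 8 → V}
    (hp : ∀ i j k : Fin 8, 0 < i → i < j → j < k →
      (LinearIndependent K ![p i, p j, p k] ↔ i ^^^ j ^^^ k ≠ 0)) :
    (2 : K) = 0 := by
  have line : ∀ i j k : Fin 8, 0 < i ∧ i < j ∧ j < k ∧ i ^^^ j ^^^ k = 0 →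
      ¬ LinearIndependent K ![p i, p j, p k] := fun i j k ⟨hi, hij, hjk, h⟩ hli =>
    (hp i j k hi hij hjk).1 hli h
  have frame : ∀ i j k : Fin 8, 0 < i ∧ i < j ∧ j < k ∧ i ^^^ j ^^^ k ≠ 0 →
      LinearIndependent K ![p i, p j, p k] := fun i j k ⟨hi, hij, hjk, h⟩ =>
    (hp i j k hi hij hjk).2 h
  set u : Fin 3 → V := ![p 1, p 2, p 4]
  have hu : LinearIndependent K u := frame 1 2 4 (by decide)
  set S := span K (range u)
  have mem : ∀ {a b c d : V}, a ∈ S → b ∈ S → LinearIndependent K ![a, b, d] →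
      ¬ LinearIndependent K ![a, b, c] → c ∈ S := fun ha hb habd habc =>
    span_le.2 (insert_subset ha (singleton_subset_iff.2 hb))
      (mem_span_pair_of_not_linearIndependent (linearIndependent_pair_of_triple habd) habc)
  have h1 : p 1 ∈ S := subset_span ⟨0, rfl⟩
  have h2 : p 2 ∈ S := subset_span ⟨1, rfl⟩
  have h4 : p 4 ∈ S := subset_span ⟨2, rfl⟩
  have h3 : p 3 ∈ S := mem h1 h2 hu (line 1 2 3 (by decide))
  have h5 : p 5 ∈ S := mem h1 h4 (frame 1 4 7 (by decide)) (line 1 4 5 (by decide))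
  have h6 : p 6 ∈ S := mem h2 h4 (frame 2 4 7 (by decide)) (line 2 4 6 (by decide))
  have h7 : p 7 ∈ S := mem h3 h4 (frame 3 4 5 (by decide)) (line 3 4 7 (by decide))
  obtain ⟨x3, hx3⟩ := (mem_span_range_iff_exists_fun K).1 h3
  obtain ⟨x5, hx5⟩ := (mem_span_range_iff_exists_fun K).1 h5
  obtain ⟨x6, hx6⟩ := (mem_span_range_iff_exists_fun K).1 h6
  obtain ⟨x7, hx7⟩ := (mem_span_range_iff_exists_fun K).1 h7
  set X : Fin 8 → Fin 3 → K := ![0, ![1, 0, 0], ![0, 1, 0], x3, ![0, 0, 1], x5, x6, x7]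
  have hX : ∀ i, i ≠ 0 → ∑ j, X i j • u j = p i := by
    intro i hi
    fin_cases i <;> simp_all [X, u, Fin.sum_univ_three]
  refine two_eq_zero_of_fano_det X rfl rfl rfl fun i j k hi hij hjk => ?_
  have hrow : ![p i, p j, p k] = fun l => ∑ m, ![X i, X j, X k] l m • u m := by
    ext l
    fin_cases l
    all_goals simp [hX, hi.ne', (hi.trans hij).ne', (hi.trans (hij.trans hjk)).ne']
  rw [← hp i j k hi hij hjk, hrow, linearIndependent_sum_smul_iff_det hu]

end Fano

theorem linearIndependent_comp_iff_of_contractElem {R S W V : Type*} [Semiring R] [Semiring S]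
    [AddCommMonoid W] [Module R W] [AddCommMonoid V] [Module S V]
    {M : Matroid α} {e : α} (he : M.IsNonloop e)
    {φ : α → W} (hφ : ∀ I ⊆ M.E, M.Indep I ↔ LinearIndepOn R φ I)
    {ψ : α → V} (hψ : ∀ I ⊆ (M ／ {e}).E, (M ／ {e}).Indep I ↔ LinearIndepOn S ψ I)
    {n : ℕ} {s : Fin n → α} (hs : Function.Injective (Fin.cons e s : Fin (n + 1) → α))
    (hsE : range s ⊆ M.E) :
    LinearIndependent S (ψ ∘ s) ↔ LinearIndependent R (φ ∘ Fin.cons e s) := by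
  have hs' : Function.Injective s := fun a b h => Fin.succ_injective n (hs (by simpa using h))
  have he_notMem : e ∉ range s := fun ⟨i, hi⟩ => Fin.succ_ne_zero i (hs (by simpa using hi))
  have hconsE : range (Fin.cons e s : Fin (n + 1) → α) ⊆ M.E := by
    rw [Fin.range_cons]
    exact insert_subset he.mem_ground hsE
  rw [← linearIndepOn_range_iff hs', ← linearIndepOn_range_iff hs,
    ← hφ _ hconsE, Fin.range_cons, ← hψ _ (subset_sdiff_singleton hsE he_notMem),
    he.contractElem_indep_iff, and_iff_right he_notMem]

/-- Row `e` labels AG(3,2) by `F₂³` (read in binary): `agFanoLabel e i` is the point with column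
`agCols e + L i`, where `L` is linear with `L 1 = agCols 1 + agCols 0`, `L 2 = agCols 2 + agCols 0`
and `L 4 = agCols 3 + agCols 0`. -/
def agFanoLabel : Fin 8 → Fin 8 → Fin 8 :=
  ![![0, 1, 2, 7, 3, 6, 5, 4], ![1, 0, 7, 2, 6, 3, 4, 5], ![2, 7, 0, 1, 5, 4, 3, 6],
    ![3, 6, 5, 4, 0, 1, 2, 7], ![4, 5, 6, 3, 7, 2, 1, 0], ![5, 4, 3, 6, 2, 7, 0, 1],
    ![6, 3, 4, 5, 1, 0, 7, 2], ![7, 2, 1, 0, 4, 5, 6, 3]]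

theorem agFanoLabel_spec : ∀ e i j k : Fin 8, 0 < i → i < j → j < k →
    Function.Injective ![e, agFanoLabel e i, agFanoLabel e j, agFanoLabel e k] ∧
      (LinearIndependent (ZMod 2)
          (agCols ∘ ![e, agFanoLabel e i, agFanoLabel e j, agFanoLabel e k]) ↔
        i ^^^ j ^^^ k ≠ 0) := by
  simp only [Fintype.linearIndependent_iff]
  decide +kernel

/-- AG(3,2) has no regular elements. -/
theorem ag32_no_regular_elements (M : Matroid (Fin 8)) (hE : M.E = Set.univ)
    (hrep : ∀ I : Set (Fin 8),
      M.Indep I ↔ LinearIndependent (ZMod 2) (fun x : I => agCols x)) :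
    ∀ e : Fin 8, ¬ M.IsRegularElem e := by
  rintro e ⟨-, hcon⟩
  obtain ⟨n, ψ, hψ⟩ := hcon ℚ
  have he : M.IsNonloop e := indep_singleton.1 <|
    (hrep {e}).2 <| (linearIndepOn_singleton_iff (ZMod 2)).2 (by fin_cases e <;> decide)
  refine two_ne_zero <| two_eq_zero_of_fano (K := ℚ) (p := ψ ∘ agFanoLabel e)
    fun i j k hi hij hjk => ?_
  obtain ⟨hinj, hli⟩ := agFanoLabel_spec e i j k hi hij hjk
  have hψq : ![(ψ ∘ agFanoLabel e) i, (ψ ∘ agFanoLabel e) j, (ψ ∘ agFanoLabel e) k] =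
      ψ ∘ ![agFanoLabel e i, agFanoLabel e j, agFanoLabel e k] := by
    ext l
    fin_cases l <;> rfl
  rw [hψq, ← hli]
  exact linearIndependent_comp_iff_of_contractElem he (fun I _ => hrep I)
    (fun I hI => (hψ I).trans (and_iff_right hI)) hinj (by simp [hE])
end

section
/- The matroid P₉ (the binary single-element extension of the rank-4 wheel M(W₄) where the new element forms a circuit with three consecutive spokes) satisfies: P₉ \ 1 ≅ S₈, P₉ \ 3 ≅ S₈, and P₉ \ {1,3} ≅ F₇*, where 1 and 3 are two of the spokes in the defining circuit. -/
open Matroid Set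

variable {α β : Type*}

/-- The columns of the matrix `[I₄ | D]` over GF(2) representing P₉. -/
def p9Cols : Fin 9 → Fin 4 → ZMod 2 :=
  ![![1,0,0,0], ![0,1,0,0], ![0,0,1,0], ![0,0,0,1],
    ![0,1,1,1], ![1,0,1,1], ![1,1,0,1], ![1,1,1,1], ![1,1,0,0]]

/-- The columns of the matrix `[I₄ | D]` over GF(2) representing S₈. -/
def s8Cols : Fin 8 → Fin 4 → ZMod 2 :=
  ![![1,0,0,0], ![0,1,0,0], ![0,0,1,0], ![0,0,0,1],
    ![0,1,1,1], ![1,0,1,1], ![1,1,0,1], ![1,1,1,1]]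

/-- The columns of the Fano matrix `[I₃ | D]` over GF(2). -/
def fanoCols : Fin 7 → Fin 3 → ZMod 2 :=
  ![![1,0,0], ![0,1,0], ![0,0,1], ![1,1,0], ![0,1,1], ![1,0,1], ![1,1,1]]

/-!
`P₉ \ 8` has literally the matrix of `S₈`. In `P₉ \ 7` the column `(1,1,0,0)` takes over the
role of `(1,1,1,1)`: after relabelling, a change of basis of `GF(2)⁴` carries the columns of one
matrix to those of the other. Finally `P₉ \ {7,8} = [I₄ | D]`, where the columns of `D` are,
up to order, the rows of `D″`; so it is `[D″ᵀ | I₄]`, the standard representation of `F₇✶`.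
This last fact is checked directly: the independent sets of `F₇✶` are those avoiding a base
of `F₇`, the bases of `F₇` are its independent `3`-sets, and over `GF(2)` independence means
that no nonempty subfamily sums to zero.
-/

abbrev ZeroSumFree {ι M : Type*} [AddCommMonoid M] (v : ι → M) (J : Finset ι) : Prop :=
  ∀ t ⊆ J, ∑ i ∈ t, v i = 0 → t = ∅

theorem linearIndepOn_finset_zmod_two_iff {ι M : Type*} [AddCommGroup M] [Module (ZMod 2) M]
    (v : ι → M) (J : Finset ι) : LinearIndepOn (ZMod 2) v ↑J ↔ ZeroSumFree v J := by
  classical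
  have smul_eq (c : ZMod 2) (x : M) : c • x = if c ≠ 0 then x else 0 := by
    obtain rfl | rfl : c = 0 ∨ c = 1 := by revert c; decide
    all_goals simp
  rw [linearIndepOn_finset_iff]
  constructor
  · intro h t htJ ht
    have hind := h (fun i => if i ∈ t then 1 else 0) (by
      simpa [ite_smul, Finset.sum_ite_mem, Finset.inter_eq_right.2 htJ] using ht)
    exact Finset.eq_empty_of_forall_notMem fun i hi => by simpa [hi] using hind i (htJ hi)
  · intro h f hf i hi
    have hsupp := h (J.filter (f · ≠ 0)) (Finset.filter_subset _ _) (by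
      rwa [Finset.sum_filter, ← Finset.sum_congr rfl fun i _ => smul_eq (f i) (v i)])
    by_contra hfi
    have hmem : i ∈ J.filter (f · ≠ 0) := Finset.mem_filter.2 ⟨hi, hfi⟩
    simp [hsupp] at hmem

theorem LinearIndepOn.ncard_le_finrank {ι R M : Type*} [Ring R] [StrongRankCondition R]
    [AddCommGroup M] [Module R M] [Module.Finite R M] {v : ι → M} {s : Set ι}
    (h : LinearIndepOn R v s) : s.ncard ≤ Module.finrank R M := by
  rw [← Nat.card_coe_set_eq, Nat.card]
  simpa using Cardinal.toNat_le_toNat h.cardinalMk_le_finrank Cardinal.natCast_lt_aleph0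

theorem linearIndepOn_image_iff_of_linearEquiv {ι κ R M N : Type*} [Ring R] [AddCommGroup M]
    [Module R M] [AddCommGroup N] [Module R N] {v : ι → M} {w : κ → N} {f : ι → κ} {s : Set ι}
    (hf : InjOn f s) (L : M ≃ₗ[R] N) (hL : ∀ x ∈ s, L (v x) = w (f x)) :
    LinearIndepOn R w (f '' s) ↔ LinearIndepOn R v s :=
  calc LinearIndepOn R w (f '' s) ↔ LinearIndepOn R (w ∘ f) s :=
        ⟨fun h => h.comp_of_image hf, fun h => h.image_of_comp f w⟩
    _ ↔ LinearIndepOn R (L ∘ v) s := linearIndepOn_congr fun x hx => (hL x hx).symm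
    _ ↔ LinearIndepOn R v s := (L : M →ₗ[R] N).linearIndepOn_iff_of_injOn L.injective.injOn

namespace Matroid

theorem MIso.of_bijOn {M : Matroid α} {N : Matroid β} (f : α → β) (hf : BijOn f M.E N.E)
    (h : ∀ I ⊆ M.E, M.Indep I ↔ N.Indep (f '' I)) : M.MIso N := by
  refine ⟨hf.equiv f, fun I => ?_⟩
  have h' := h _ (Subtype.coe_image_subset _ I)
  rw [image_image] at h' ⊢
  exact h'

theorem MIso.of_linearEquiv {R V W : Type*} [Ring R] [AddCommGroup V] [Module R V]
    [AddCommGroup W] [Module R W] {M : Matroid α} {N : Matroid β} {v : α → V} {w : β → W}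
    (hM : ∀ I ⊆ M.E, M.Indep I ↔ LinearIndepOn R v I)
    (hN : ∀ J ⊆ N.E, N.Indep J ↔ LinearIndepOn R w J)
    (f : α → β) (hf : BijOn f M.E N.E) (L : V ≃ₗ[R] W) (hL : ∀ x ∈ M.E, L (v x) = w (f x)) :
    M.MIso N :=
  .of_bijOn f hf fun I hI => by
    rw [hM I hI, hN _ ((image_mono hI).trans hf.image_eq.subset),
      linearIndepOn_image_iff_of_linearEquiv (hf.injOn.mono hI) L fun x hx => hL x (hI hx)]

theorem del_indep_iff_of_subset_ground {M : Matroid α} {D I : Set α} (hI : I ⊆ (M.del D).E) :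
    (M.del D).Indep I ↔ M.Indep I :=
  restrict_indep_iff.trans (and_iff_left hI)

theorem isBase_iff_indep_ncard_eq [Finite α] {M : Matroid α} {r : ℕ}
    (hle : ∀ I, M.Indep I → I.ncard ≤ r) {B₀ : Set α} (hB₀ : M.Indep B₀) (hB₀r : B₀.ncard = r)
    {B : Set α} : M.IsBase B ↔ M.Indep B ∧ B.ncard = r := by
  have isBase_of {I : Set α} (hI : M.Indep I) (hIr : I.ncard = r) : M.IsBase I :=
    hI.isBase_of_forall_insert fun e he hins => by
      have := hle _ hins
      rw [ncard_insert_of_notMem he.2, hIr] at this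
      omega
  exact ⟨fun hB => ⟨hB.indep, (hB.ncard_eq_ncard_of_isBase (isBase_of hB₀ hB₀r)).trans hB₀r⟩,
    fun hB => isBase_of hB.1 hB.2⟩

end Matroid

/-- `[D″ᵀ | I₄]`, the standard representation of the dual of `[I₃ | D″]`. -/
def fanoDualCols : Fin 7 → Fin 4 → ZMod 2 :=
  ![![1,0,1,1], ![1,1,0,1], ![0,1,1,1], ![1,0,0,0], ![0,1,0,0], ![0,0,1,0], ![0,0,0,1]]

set_option maxRecDepth 40000 in
theorem zeroSumFree_fanoDualCols_iff (J : Finset (Fin 7)) :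
    ZeroSumFree fanoDualCols J ↔ ∃ B ∈ Jᶜ.powersetCard 3, ZeroSumFree fanoCols B := by
  revert J
  decide

theorem fano_isBase_iff {F : Matroid (Fin 7)}
    (hF : ∀ I : Set (Fin 7), F.Indep I ↔ LinearIndepOn (ZMod 2) fanoCols I)
    (B : Finset (Fin 7)) : F.IsBase B ↔ ZeroSumFree fanoCols B ∧ B.card = 3 := by
  have hle (I : Set (Fin 7)) (hI : F.Indep I) : I.ncard ≤ 3 := by
    simpa using ((hF I).1 hI).ncard_le_finrank
  have hB₀ : F.Indep ↑({0, 1, 2} : Finset (Fin 7)) := by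
    rw [hF, linearIndepOn_finset_zmod_two_iff]
    decide
  rw [Matroid.isBase_iff_indep_ncard_eq hle hB₀ (by simp), hF, ncard_coe_finset,
    linearIndepOn_finset_zmod_two_iff]

theorem fano_dual_indep_iff {F : Matroid (Fin 7)} (hFE : F.E = univ)
    (hF : ∀ I : Set (Fin 7), F.Indep I ↔ LinearIndepOn (ZMod 2) fanoCols I)
    (J : Set (Fin 7)) : F✶.Indep J ↔ LinearIndepOn (ZMod 2) fanoDualCols J := by
  obtain ⟨J, rfl⟩ := J.toFinite.exists_finset_coe
  rw [dual_indep_iff_exists', hFE, linearIndepOn_finset_zmod_two_iff,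
    zeroSumFree_fanoDualCols_iff]
  simp only [subset_univ, true_and, Finset.mem_powersetCard,
    Finset.subset_compl_iff_disjoint_left]
  constructor
  · rintro ⟨B, hB, hJB⟩
    obtain ⟨B, rfl⟩ := B.toFinite.exists_finset_coe
    rw [fano_isBase_iff hF] at hB
    exact ⟨B, ⟨Finset.disjoint_coe.1 hJB, hB.2⟩, hB.1⟩
  · rintro ⟨B, ⟨hJB, hB⟩, hBfree⟩
    exact ⟨B, (fano_isBase_iff hF B).2 ⟨hBfree, hB⟩, Finset.disjoint_coe.2 hJB⟩

-- The value at a deleted element is irrelevant.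
def del7Relabel : Fin 9 → Fin 8 := ![0, 4, 3, 1, 2, 6, 5, 0, 7]

def del8Relabel : Fin 9 → Fin 8 := ![0, 1, 2, 3, 4, 5, 6, 7, 0]

def del78Relabel : Fin 9 → Fin 7 := ![3, 4, 5, 6, 2, 0, 1, 0, 0]

-- The columns of the first matrix are `s8Cols (del7Relabel i)` for `i < 4`.
def del7BasisChange : (Fin 4 → ZMod 2) ≃ₗ[ZMod 2] (Fin 4 → ZMod 2) :=
  Matrix.toLinearEquiv' !![1,0,0,0; 0,1,0,1; 0,1,0,0; 0,1,1,0]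
    (invertibleOfLeftInverse _ !![1,0,0,0; 0,0,1,0; 0,0,1,1; 0,1,1,0] (by decide))

/-- The spokes 1 and 3 are the elements `7` and `8`, with columns `(1,1,1,1)` and `(1,1,0,0)`. -/
theorem p9_deletions (P : Matroid (Fin 9)) (S : Matroid (Fin 8)) (F : Matroid (Fin 7))
    (hPE : P.E = Set.univ)
    (hPrep : ∀ I : Set (Fin 9),
      P.Indep I ↔ LinearIndependent (ZMod 2) (fun x : I => p9Cols x))
    (hSE : S.E = Set.univ)
    (hSrep : ∀ I : Set (Fin 8),
      S.Indep I ↔ LinearIndependent (ZMod 2) (fun x : I => s8Cols x))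
    (hFE : F.E = Set.univ)
    (hFrep : ∀ I : Set (Fin 7),
      F.Indep I ↔ LinearIndependent (ZMod 2) (fun x : I => fanoCols x)) :
    (P.del {7}).MIso S ∧ (P.del {8}).MIso S ∧ (P.del {7, 8}).MIso F✶ := by
  have hP (D : Set (Fin 9)) :
      ∀ I ⊆ (P.del D).E, (P.del D).Indep I ↔ LinearIndepOn (ZMod 2) p9Cols I :=
    fun I hI => (Matroid.del_indep_iff_of_subset_ground hI).trans (hPrep I)
  have hS : ∀ I ⊆ S.E, S.Indep I ↔ LinearIndepOn (ZMod 2) s8Cols I := fun I _ => hSrep I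
  have hF : ∀ I ⊆ F✶.E, F✶.Indep I ↔ LinearIndepOn (ZMod 2) fanoDualCols I :=
    fun I _ => fano_dual_indep_iff hFE hFrep I
  have hE (D : Set (Fin 9)) : (P.del D).E = Dᶜ := by
    rw [Matroid.del, restrict_ground_eq, hPE, compl_eq_univ_sdiff]
  refine ⟨.of_linearEquiv (hP _) hS del7Relabel ?_ del7BasisChange ?_,
    .of_linearEquiv (hP _) hS del8Relabel ?_ (.refl _ _) ?_,
    .of_linearEquiv (hP _) hF del78Relabel ?_ (.refl _ _) ?_⟩
  all_goals
    simp only [hE, hSE, hFE, dual_ground, ← Finset.coe_singleton, ← Finset.coe_insert,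
      ← Finset.coe_compl, ← Finset.coe_univ]
    decide
end
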